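/- Let G be a graph with n vertices, S a symmetry group in dimension d, Φ : S -> Aut(G) a homomorphism, and let (G,p) be a framework of type Φ, i.e., M_x p_i = p_{Φ(x)(v_i)} for all x in S and all vertices v_i, where M_x is the orthogonal matrix of x. Then the rigidity matrix satisfies the equivariance relation R(G,p) H_e(x) = H_i(x) R(G,p) for all x in S, where H_e(x) is the external representation matrix and H_i(x) the internal representation matrix. -/

import Mathlib

/-- The rigidity matrix of a framework (configuration given vertex-wise). -/
def rigidityMatrix (n d : ℕ) (E : Finset (Fin n × Fin n)) (p : Fin n → Fin d → ℝ) :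
    Matrix E (Fin n × Fin d) ℝ :=
  Matrix.of fun e ka =>
    if ka.1 = e.1.1 then p e.1.1 ka.2 - p e.1.2 ka.2
    else if ka.1 = e.1.2 then p e.1.2 ka.2 - p e.1.1 ka.2
    else 0

/-- The external representation matrix `H_e(x)`: obtained from the transpose of the
permutation matrix of `Φ(x)` (acting on vertices via `π`) by replacing each `1` with
the orthogonal matrix `M_x`. -/
def externalRep (n d : ℕ) {S : Type*} (M : S → Matrix (Fin d) (Fin d) ℝ)
    (π : S → Equiv.Perm (Fin n)) (x : S) :
    Matrix (Fin n × Fin d) (Fin n × Fin d) ℝ :=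
  Matrix.of fun ka lb => if lb.1 = (π x)⁻¹ ka.1 then M x ka.2 lb.2 else 0

/-- The internal representation matrix `H_i(x)`: the transpose of the permutation
matrix of the permutation `τ x` induced on the edge set by `Φ(x)`. -/
def internalRep {S : Type*} {n : ℕ} (E : Finset (Fin n × Fin n))
    (τ : S → Equiv.Perm E) (x : S) : Matrix E E ℝ :=
  Matrix.of fun e f => if f = (τ x)⁻¹ e then 1 else 0

/-!
Each row of `R(G,p)` factors as `(δ_{k,i} - δ_{k,j}) (p_i - p_j)` for its edge `{v_i, v_j}`, an
expression symmetric in `i, j`. Multiplying on the right by `H_e(x)` replaces the column block of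
a vertex `l` by that of `Φ(x) l`, multiplied on the right by `M_x`; since `M_x` is orthogonal and
`M_x p_k = p_{Φ(x) k}`, this turns `p_{Φ(x) i} - p_{Φ(x) j}` back into `p_i - p_j`. Multiplying
on the left by `H_i(x)` only permutes the rows, and `Φ(x)` maps the edge of row `Φ(x)⁻¹ e` onto
`e` in one of the two orders.
-/

open Matrix

theorem Matrix.mulVec_vecMul_of_mem_orthogonalGroup {ι R : Type*} [Fintype ι] [DecidableEq ι]
    [CommRing R] {M : Matrix ι ι R} (hM : M ∈ orthogonalGroup ι R) (v : ι → R) :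
    (M *ᵥ v) ᵥ* M = v := by
  rw [← vecMul_transpose, vecMul_vecMul, (mem_orthogonalGroup_iff' ι R).mp hM, vecMul_one]

section RigidityRow

variable {V κ R : Type*} [DecidableEq V] [CommRing R]

def rigidityRow (p : V → κ → R) (i j : V) (ka : V × κ) : R :=
  ((if ka.1 = i then 1 else 0) - (if ka.1 = j then 1 else 0)) * (p i ka.2 - p j ka.2)

theorem rigidityRow_comm (p : V → κ → R) (i j : V) :
    rigidityRow p i j = rigidityRow p j i := by
  ext ka
  simp only [rigidityRow]
  ring

theorem sum_rigidityRow_mul_of_mulVec_eq [Fintype κ] [DecidableEq κ] {M : Matrix κ κ R}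
    (hM : M ∈ orthogonalGroup κ R) {σ : Equiv.Perm V} {p : V → κ → R}
    (hp : ∀ k, M *ᵥ p k = p (σ k)) (i j l : V) (b : κ) :
    ∑ a, rigidityRow p (σ i) (σ j) (σ l, a) * M a b = rigidityRow p i j (l, b) := by
  have hsum : ∀ k, ∑ a, p (σ k) a * M a b = p k b := fun k => by
    rw [← hp]
    exact congrFun (mulVec_vecMul_of_mem_orthogonalGroup hM (p k)) b
  simp only [rigidityRow, σ.injective.eq_iff, mul_assoc, ← Finset.mul_sum, sub_mul,
    Finset.sum_sub_distrib, hsum]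

end RigidityRow

section Framework

variable {n d : ℕ}

theorem rigidityMatrix_row (E : Finset (Fin n × Fin n)) (p : Fin n → Fin d → ℝ) (e : E) :
    rigidityMatrix n d E p e = rigidityRow p e.1.1 e.1.2 := by
  ext ⟨k, a⟩
  simp only [rigidityMatrix, rigidityRow, of_apply]
  split_ifs <;> simp_all

theorem internalRep_mul {S ι : Type*} (E : Finset (Fin n × Fin n)) (τ : S → Equiv.Perm E)
    (x : S) (A : Matrix E ι ℝ) :
    internalRep E τ x * A = A.submatrix ⇑(τ x)⁻¹ id := by
  have hperm : internalRep E τ x = ((τ x)⁻¹ : Equiv.Perm E).toPEquiv.toMatrix := by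
    ext e f
    simp [internalRep, PEquiv.toMatrix_apply, eq_comm]
  rw [hperm, PEquiv.toMatrix_toPEquiv_mul]

theorem mul_externalRep_apply {S ι : Type*} (M : S → Matrix (Fin d) (Fin d) ℝ)
    (π : S → Equiv.Perm (Fin n)) (x : S) (A : Matrix ι (Fin n × Fin d) ℝ) (i : ι) (l : Fin n)
    (b : Fin d) :
    (A * externalRep n d M π x) i (l, b) = ∑ a, A i (π x l, a) * M x a b := by
  rw [mul_apply, Fintype.sum_prod_type, Finset.sum_comm]
  simp only [externalRep, of_apply, Equiv.Perm.coe_inv, Equiv.eq_symm_apply, mul_ite, mul_zero,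
    Finset.sum_ite_eq, Finset.mem_univ, if_true]

end Framework

theorem rigidityMatrix_equivariant_general
    (n d : ℕ) (E : Finset (Fin n × Fin n)) {S : Type*}
    (M : S → Matrix (Fin d) (Fin d) ℝ)
    (hMorth : ∀ x, M x ∈ Matrix.orthogonalGroup (Fin d) ℝ)
    (π : S → Equiv.Perm (Fin n))
    (τ : S → Equiv.Perm E)
    (hτ : ∀ (x : S) (e : E),
      ((τ x e : Fin n × Fin n) = (π x e.1.1, π x e.1.2)) ∨
      ((τ x e : Fin n × Fin n) = (π x e.1.2, π x e.1.1)))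
    (p : Fin n → Fin d → ℝ)
    (hp : ∀ (x : S) (k : Fin n), (M x).mulVec (p k) = p (π x k)) :
    ∀ x : S,
      rigidityMatrix n d E p * externalRep n d M π x =
        internalRep E τ x * rigidityMatrix n d E p := by
  intro x
  ext e ⟨l, b⟩
  rw [mul_externalRep_apply, internalRep_mul, submatrix_apply, id]
  obtain ⟨f, rfl⟩ := (τ x).surjective e
  rw [Equiv.Perm.coe_inv, Equiv.symm_apply_apply, rigidityMatrix_row, rigidityMatrix_row]
  have hrow : rigidityRow p (τ x f).1.1 (τ x f).1.2 = rigidityRow p (π x f.1.1) (π x f.1.2) := by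
    rcases hτ x f with h | h <;> rw [h]
    exact rigidityRow_comm p _ _
  rw [hrow, sum_rigidityRow_mul_of_mulVec_eq (hMorth x) (hp x)]

/-- for a framework `(G,p)` of type `Φ` for a symmetry group `S`, the
rigidity matrix is equivariant: `R(G,p) H_e(x) = H_i(x) R(G,p)` for all `x ∈ S`. -/
theorem rigidityMatrix_equivariant
    (n d : ℕ) (E : Finset (Fin n × Fin n)) {S : Type*} [Group S]
    (M : S → Matrix (Fin d) (Fin d) ℝ)
    (hMorth : ∀ x, M x ∈ Matrix.orthogonalGroup (Fin d) ℝ)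
    (hMmul : ∀ x y, M (x * y) = M x * M y)
    (π : S → Equiv.Perm (Fin n))
    (hπmul : ∀ x y, π (x * y) = π x * π y)
    (τ : S → Equiv.Perm E)
    (hτ : ∀ (x : S) (e : E),
      ((τ x e : Fin n × Fin n) = (π x e.1.1, π x e.1.2)) ∨
      ((τ x e : Fin n × Fin n) = (π x e.1.2, π x e.1.1)))
    (p : Fin n → Fin d → ℝ)
    (hp : ∀ (x : S) (k : Fin n), (M x).mulVec (p k) = p (π x k)) :
    ∀ x : S,
      rigidityMatrix n d E p * externalRep n d M π x =
        internalRep E τ x * rigidityMatrix n d E p :=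
  rigidityMatrix_equivariant_general n d E M hMorth π τ hτ p hp
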